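/- arXiv:2403.15198 — 2 statements merged into one kernel-verified Lean document; each statement's English description precedes it below -/
import Mathlib

section
/- Let β ∈ ℝ₊^{n−1} with β_2 > 0 and let μ be the counting measure. Then P_β satisfies the partitionwise Pareto property: for every increasing sequence of integers 0 = k_0 < k_1 < … < k_ℓ = n and every profile V = (v¹,…,vᵐ), if for every i ∈ [ℓ] and all j, j' ∈ [m] one has vʲ((k_{i−1}, k_i]) = vʲ'((k_{i−1}, k_i]), then for every i ∈ [ℓ] and every v ∈ P_β(V), v((k_{i−1}, k_i]) = v¹((k_{i−1}, k_i]). -/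
/-!
Stably re-sorting a ranking `w` so that it respects a block structure on which all voters agree
(`blockSort`) never hurts: on a menu where `w` already picks a voter's top candidate, that
candidate lies in the earliest block present in the menu and stays on top; and on a pair `{a, b}`
where `w` ranks a later block first, the cost to every voter drops from `2 β₂` to `0`. So every
median ranking respects every unanimous block structure. Applied to the two blocks
`(0, k_j]`, `(k_j, n]` for each cut `k_j`, this fixes the prefixes of a median ranking, and each
block `(k_{i-1}, k_i]` is the difference of two consecutive prefixes.
-/

open Finset

noncomputable section

/-- `i >_σ j`: candidate `i` is ranked above candidate `j` by `σ`
(where `σ i` is the candidate in position `i`). -/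
def prefOver {n : ℕ} (σ : Equiv.Perm (Fin n)) (i j : Fin n) : Prop :=
  σ.symm i < σ.symm j

/-- `M(S,σ)`: the set of `>_σ`-maximal elements of `S` (a singleton when `S ≠ ∅`). -/
def bestSet {n : ℕ} (σ : Equiv.Perm (Fin n)) (S : Finset (Fin n)) : Finset (Fin n) :=
  S.filter fun x => ∀ y ∈ S, σ.symm x ≤ σ.symm y

/-- `△_S(σ,π) = M(S,σ) △ M(S,π)`. -/
def topDiff {n : ℕ} (σ π : Equiv.Perm (Fin n)) (S : Finset (Fin n)) : Finset (Fin n) :=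
  symmDiff (bestSet σ S) (bestSet π S)

/-- The `(β,μ)`-top-difference distance; `β i` is the weight of menus of size `i+2`. -/
def dTD (n : ℕ) (β : Fin (n - 1) → ℝ) (μ : Fin n → ℝ)
    (σ π : Equiv.Perm (Fin n)) : ℝ :=
  ∑ S ∈ Finset.univ.filter (fun S : Finset (Fin n) => 2 ≤ S.card),
    (if h : S.card - 2 < n - 1 then β ⟨S.card - 2, h⟩ else 0) *
      ∑ x ∈ topDiff σ π S, μ x

def IsSemimetric {α : Type*} (d : α → α → ℝ) : Prop :=
  (∀ x y, 0 ≤ d x y) ∧ (∀ x y, d x y = d y x) ∧ (∀ x, d x x = 0) ∧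
    (∀ x y z, d x z ≤ d x y + d y z)

def IsMetricFn {α : Type*} (d : α → α → ℝ) : Prop :=
  IsSemimetric d ∧ ∀ x y, d x y = 0 → x = y

/-- Cumulative distance of `σ` to a profile of voters. -/
def dProf (n : ℕ) (β : Fin (n - 1) → ℝ) (μ : Fin n → ℝ)
    (σ : Equiv.Perm (Fin n)) (V : List (Equiv.Perm (Fin n))) : ℝ :=
  (V.map (dTD n β μ σ)).sum

/-- The median preference correspondence `P^μ_β`. -/
def Pmed (n : ℕ) (β : Fin (n - 1) → ℝ) (μ : Fin n → ℝ)
    (V : List (Equiv.Perm (Fin n))) : Set (Equiv.Perm (Fin n)) :=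
  {σ | ∀ τ : Equiv.Perm (Fin n), dProf n β μ σ V ≤ dProf n β μ τ V}

/-- The winner set `W^μ_β`: candidates ranked first by some consensus ranking. -/
def Wmed (n : ℕ) (hn : 0 < n) (β : Fin (n - 1) → ℝ) (μ : Fin n → ℝ)
    (V : List (Equiv.Perm (Fin n))) : Set (Fin n) :=
  {c | ∃ σ ∈ Pmed n β μ V, σ ⟨0, hn⟩ = c}

/-- `σ((a,b])`: the set of candidates in positions `a+1,…,b` of `σ`. -/
def blockSet {n : ℕ} (σ : Equiv.Perm (Fin n)) (a b : ℕ) : Finset (Fin n) :=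
  Finset.univ.filter fun c => a ≤ (σ.symm c : ℕ) ∧ (σ.symm c : ℕ) < b

open Equiv

section Ranking

variable {n : ℕ}

lemma mem_bestSet {σ : Perm (Fin n)} {S : Finset (Fin n)} {t : Fin n} :
    t ∈ bestSet σ S ↔ t ∈ S ∧ ∀ y ∈ S, σ.symm t ≤ σ.symm y :=
  mem_filter

lemma mem_bestSet_pair {σ : Perm (Fin n)} {a b : Fin n} :
    a ∈ bestSet σ {a, b} ↔ σ.symm a ≤ σ.symm b := by
  simp [mem_bestSet]

lemma bestSet_eq_singleton {σ : Perm (Fin n)} {S : Finset (Fin n)} {t : Fin n}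
    (ht : t ∈ bestSet σ S) : bestSet σ S = {t} := by
  refine eq_singleton_iff_unique_mem.2 ⟨ht, fun x hx => σ.symm.injective ?_⟩
  rw [mem_bestSet] at ht hx
  exact le_antisymm (hx.2 t ht.1) (ht.2 x hx.1)

lemma bestSet_nonempty (σ : Perm (Fin n)) {S : Finset (Fin n)} (hS : S.Nonempty) :
    (bestSet σ S).Nonempty := by
  obtain ⟨t, ht, hmin⟩ := S.exists_min_image σ.symm hS
  exact ⟨t, mem_bestSet.2 ⟨ht, hmin⟩⟩

lemma card_topDiff (σ π : Perm (Fin n)) {S : Finset (Fin n)} (hS : S.Nonempty) :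
    #(topDiff σ π S) = if bestSet σ S = bestSet π S then 0 else 2 := by
  obtain ⟨t, ht⟩ := bestSet_nonempty σ hS
  obtain ⟨s, hs⟩ := bestSet_nonempty π hS
  rw [topDiff, bestSet_eq_singleton ht, bestSet_eq_singleton hs]
  simp only [singleton_inj]
  split_ifs with hts
  · simp [hts]
  · rw [symmDiff_eq_sup_sdiff_inf, sup_eq_union, inf_eq_inter,
      singleton_inter_of_notMem (by simpa using hts), sdiff_empty]
    exact card_pair hts

end Ranking

section BlockSort

variable {n : ℕ} {α : Type*} [LinearOrder α]

def RespectsBlocks (blk : Fin n → α) (σ : Perm (Fin n)) : Prop :=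
  ∀ a b, blk a < blk b → σ.symm a < σ.symm b

def blockSort (blk : Fin n → α) (w : Perm (Fin n)) : Perm (Fin n) :=
  Tuple.sort fun c => toLex (blk c, w.symm c)

lemma blockSort_symm_le_iff (blk : Fin n → α) (w : Perm (Fin n)) (a b : Fin n) :
    (blockSort blk w).symm a ≤ (blockSort blk w).symm b ↔
      toLex (blk a, w.symm a) ≤ toLex (blk b, w.symm b) := by
  unfold blockSort
  set key : Fin n → α ×ₗ Fin n := fun c => toLex (blk c, w.symm c)
  have hkey : Function.Injective key := fun a b h =>
    w.symm.injective (congrArg (fun p => (ofLex p).2) h)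
  have hsorted : StrictMono (key ∘ Tuple.sort key) :=
    (Tuple.monotone_sort key).strictMono_of_injective (hkey.comp (Tuple.sort key).injective)
  simpa using (hsorted.le_iff_le (a := (Tuple.sort key).symm a)
    (b := (Tuple.sort key).symm b)).symm

variable {blk : Fin n → α} {u w : Perm (Fin n)}

lemma mem_bestSet_blockSort (hu : RespectsBlocks blk u) {S : Finset (Fin n)} {t : Fin n}
    (htu : t ∈ bestSet u S) (htw : t ∈ bestSet w S) : t ∈ bestSet (blockSort blk w) S := by
  rw [mem_bestSet] at htu htw ⊢
  refine ⟨htu.1, fun z hz => (blockSort_symm_le_iff blk w t z).2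
    (Prod.Lex.toLex_mono ⟨?_, htw.2 z hz⟩)⟩
  exact not_lt.1 fun h => (hu z t h).not_ge (htu.2 z hz)

lemma card_topDiff_blockSort_le (hu : RespectsBlocks blk u) (w : Perm (Fin n))
    (S : Finset (Fin n)) : #(topDiff (blockSort blk w) u S) ≤ #(topDiff w u S) := by
  rcases S.eq_empty_or_nonempty with rfl | hS
  · simp [topDiff, bestSet]
  obtain ⟨t, ht⟩ := bestSet_nonempty u hS
  rw [card_topDiff _ _ hS, card_topDiff _ _ hS, bestSet_eq_singleton ht]
  by_cases hw : bestSet w S = {t}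
  · rw [if_pos hw, if_pos (bestSet_eq_singleton
      (mem_bestSet_blockSort hu ht (hw ▸ mem_singleton_self t)))]
  · rw [if_neg hw]
    split_ifs <;> omega

lemma card_topDiff_blockSort_pair_lt (hu : RespectsBlocks blk u) {a b : Fin n}
    (hblk : blk a < blk b) (hw : ¬ w.symm a < w.symm b) :
    #(topDiff (blockSort blk w) u {a, b}) < #(topDiff w u {a, b}) := by
  have hba : b ≠ a := fun h => hblk.ne (congrArg blk h.symm)
  have hu_top : bestSet u {a, b} = {a} :=
    bestSet_eq_singleton (mem_bestSet_pair.2 (hu a b hblk).le)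
  have hsort_top : bestSet (blockSort blk w) {a, b} = {a} :=
    bestSet_eq_singleton (mem_bestSet_pair.2
      ((blockSort_symm_le_iff blk w a b).2 (Prod.Lex.toLex_le_toLex.2 (Or.inl hblk))))
  have hw_top : bestSet w {a, b} = {b} := by
    rw [pair_comm]
    exact bestSet_eq_singleton (mem_bestSet_pair.2 (not_lt.1 hw))
  rw [card_topDiff _ _ (insert_nonempty a {b}), card_topDiff _ _ (insert_nonempty a {b}),
    hu_top, hsort_top, hw_top]
  simp [hba]

end BlockSort

section Median

variable {n : ℕ} {β : Fin (n - 1) → ℝ}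

lemma dTD_lt_of_card_topDiff (hβ : ∀ k, 0 ≤ β k) (hn : 0 < n - 1) (hβ2 : 0 < β ⟨0, hn⟩)
    {σ σ' π : Perm (Fin n)} (hle : ∀ S, #(topDiff σ' π S) ≤ #(topDiff σ π S))
    {a b : Fin n} (hab : a ≠ b) (hlt : #(topDiff σ' π {a, b}) < #(topDiff σ π {a, b})) :
    dTD n β (fun _ => 1) σ' π < dTD n β (fun _ => 1) σ π := by
  simp only [dTD, sum_const, nsmul_eq_mul, mul_one]
  refine sum_lt_sum (fun S _ => mul_le_mul_of_nonneg_left (by exact_mod_cast hle S) ?_)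
    ⟨{a, b}, by simp [card_pair hab], ?_⟩
  · split_ifs
    exacts [hβ _, le_rfl]
  · rw [card_pair hab, dif_pos hn]
    exact mul_lt_mul_of_pos_left (by exact_mod_cast hlt) hβ2

variable {α : Type*} [LinearOrder α] {blk : Fin n → α} {w : Perm (Fin n)}

lemma dTD_blockSort_lt (hβ : ∀ k, 0 ≤ β k) (hn : 0 < n - 1) (hβ2 : 0 < β ⟨0, hn⟩)
    {u : Perm (Fin n)} (hu : RespectsBlocks blk u) (hw : ¬ RespectsBlocks blk w) :
    dTD n β (fun _ => 1) (blockSort blk w) u < dTD n β (fun _ => 1) w u := by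
  obtain ⟨a, b, hblk, hab⟩ : ∃ a b, blk a < blk b ∧ ¬ w.symm a < w.symm b := by
    simpa [RespectsBlocks] using hw
  exact dTD_lt_of_card_topDiff hβ hn hβ2 (card_topDiff_blockSort_le hu w)
    (fun h => hblk.ne (congrArg blk h)) (card_topDiff_blockSort_pair_lt hu hblk hab)

theorem respectsBlocks_of_mem_Pmed (hβ : ∀ k, 0 ≤ β k) (hn : 0 < n - 1)
    (hβ2 : 0 < β ⟨0, hn⟩) {V : List (Perm (Fin n))} (hV : V ≠ [])
    (hVblk : ∀ u ∈ V, RespectsBlocks blk u) (hw : w ∈ Pmed n β (fun _ => 1) V) :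
    RespectsBlocks blk w := by
  by_contra hbad
  obtain ⟨u, hu⟩ := List.exists_mem_of_ne_nil V hV
  exact (hw (blockSort blk w)).not_gt (List.sum_lt_sum _ _
    (fun u hu => (dTD_blockSort_lt hβ hn hβ2 (hVblk u hu) hbad).le)
    ⟨u, hu, dTD_blockSort_lt hβ hn hβ2 (hVblk u hu) hbad⟩)

end Median

section Prefix

variable {n : ℕ}

lemma blockSet_eq_sdiff (σ : Perm (Fin n)) (a b : ℕ) :
    blockSet σ a b = blockSet σ 0 b \ blockSet σ 0 a := by
  ext c
  simp [blockSet, and_comm]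

lemma blockSet_zero_union (σ : Perm (Fin n)) {a b : ℕ} (hab : a ≤ b) :
    blockSet σ 0 a ∪ blockSet σ a b = blockSet σ 0 b := by
  ext c
  simp only [blockSet, mem_union, mem_filter, mem_univ, true_and, zero_le]
  omega

lemma card_blockSet_zero (σ : Perm (Fin n)) (m : ℕ) :
    #(blockSet σ 0 m) = #(univ.filter fun p : Fin n => (p : ℕ) < m) :=
  card_nbij' σ.symm σ (fun c hc => by simpa [blockSet] using hc)
    (fun p hp => by simpa [blockSet] using hp) (fun c _ => by simp) (fun p _ => by simp)

lemma respectsBlocks_of_blockSet_zero_eq {u : Perm (Fin n)} {m : ℕ} {A : Finset (Fin n)}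
    (h : blockSet u 0 m = A) : RespectsBlocks (fun c => decide (c ∉ A)) u := by
  intro a b hab
  subst h
  simp only [blockSet, Bool.lt_iff, decide_eq_false_iff_not, decide_eq_true_eq, not_not,
    mem_filter, mem_univ, true_and, zero_le] at hab
  exact Fin.lt_def.2 (by omega)

lemma blockSet_zero_eq_of_respectsBlocks {v w : Perm (Fin n)} {m : ℕ}
    (hw : RespectsBlocks (fun c => decide (c ∉ blockSet v 0 m)) w) :
    blockSet w 0 m = blockSet v 0 m := by
  have hcard : #(blockSet w 0 m) = #(blockSet v 0 m) := by
    rw [card_blockSet_zero, card_blockSet_zero]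
  have hnested : blockSet w 0 m ⊆ blockSet v 0 m ∨ blockSet v 0 m ⊆ blockSet w 0 m := by
    by_contra! h
    obtain ⟨b, hbw, hbv⟩ := not_subset.1 h.1
    obtain ⟨a, hav, haw⟩ := not_subset.1 h.2
    have hab := hw a b (by simp [hav, hbv])
    simp only [blockSet, mem_filter, mem_univ, true_and, zero_le] at hbw haw
    omega
  rcases hnested with h | h
  · exact eq_of_subset_of_card_le h hcard.ge
  · exact (eq_of_subset_of_card_le h hcard.le).symm

lemma blockSet_zero_eq_of_blockSet_eq {σ τ : Perm (Fin n)} {ℓ : ℕ} {k : ℕ → ℕ}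
    (h0 : k 0 = 0) (hmono : ∀ i < ℓ, k i ≤ k (i + 1))
    (h : ∀ i, 1 ≤ i → i ≤ ℓ → blockSet σ (k (i - 1)) (k i) = blockSet τ (k (i - 1)) (k i)) :
    ∀ j ≤ ℓ, blockSet σ 0 (k j) = blockSet τ 0 (k j) := by
  intro j hj
  induction j with
  | zero => rw [h0]; simp [blockSet]
  | succ j ih =>
    have hblock := h (j + 1) (by omega) hj
    rw [Nat.add_sub_cancel] at hblock
    rw [← blockSet_zero_union σ (hmono j hj), ← blockSet_zero_union τ (hmono j hj),
      ih (by omega), hblock]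

end Prefix

theorem blockSet_zero_eq_of_mem_Pmed {n : ℕ} {β : Fin (n - 1) → ℝ} (hβ : ∀ k, 0 ≤ β k)
    (hn : 0 < n - 1) (hβ2 : 0 < β ⟨0, hn⟩) {V : List (Perm (Fin n))} {v w : Perm (Fin n)}
    {m : ℕ} (hv : v ∈ V) (hV : ∀ u ∈ V, blockSet u 0 m = blockSet v 0 m)
    (hw : w ∈ Pmed n β (fun _ => 1) V) : blockSet w 0 m = blockSet v 0 m :=
  blockSet_zero_eq_of_respectsBlocks (respectsBlocks_of_mem_Pmed hβ hn hβ2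
    (List.ne_nil_of_mem hv) (fun u hu => respectsBlocks_of_blockSet_zero_eq (hV u hu)) hw)

theorem stmt16 (n : ℕ) (hn : 2 ≤ n) (β : Fin (n - 1) → ℝ)
    (hβ : ∀ k, 0 ≤ β k) (hβ2 : 0 < β ⟨0, by omega⟩)
    (ℓ : ℕ) (kseq : ℕ → ℕ)
    (hmono : ∀ i, i < ℓ → kseq i < kseq (i + 1))
    (h0 : kseq 0 = 0)
    (v₁ : Equiv.Perm (Fin n)) (V : List (Equiv.Perm (Fin n)))
    (hagree : ∀ i, 1 ≤ i → i ≤ ℓ → ∀ u ∈ v₁ :: V,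
      blockSet u (kseq (i - 1)) (kseq i) = blockSet v₁ (kseq (i - 1)) (kseq i)) :
    ∀ i, 1 ≤ i → i ≤ ℓ → ∀ w ∈ Pmed n β (fun _ => (1 : ℝ)) (v₁ :: V),
      blockSet w (kseq (i - 1)) (kseq i) = blockSet v₁ (kseq (i - 1)) (kseq i) := by
  intro i hi hiℓ w hw
  have hprefix : ∀ j ≤ ℓ, blockSet w 0 (kseq j) = blockSet v₁ 0 (kseq j) := fun j hj =>
    blockSet_zero_eq_of_mem_Pmed hβ (by omega) hβ2 List.mem_cons_self
      (fun u hu => blockSet_zero_eq_of_blockSet_eq h0 (fun i hi => (hmono i hi).le)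
        (fun i hi₁ hiℓ => hagree i hi₁ hiℓ u hu) j hj) hw
  rw [blockSet_eq_sdiff, blockSet_eq_sdiff v₁, hprefix i hiℓ, hprefix (i - 1) (by omega)]
end
end

section
/- Let β ∈ ℝ₊^{n−1} with β_2 > 0. Define the β-Spearman footrule distance d^apx_β(σ,π) := Σ_{x ∈ [n]} | f_β(|x^{↓,σ}|) − f_β(|x^{↓,π}|) | and γ_β := max_{h ∈ [n]} ( 1 + f_β(n−h)/f_β(n−(h−1)) ). Then for all σ, π ∈ S_n: d^apx_β(σ,π) ≤ d_β(σ,π) ≤ γ_β · d^apx_β(σ,π). -/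
open Finset

noncomputable section

/-- `x^{↓,σ}`: the set of candidates ranked strictly below `x` by `σ`. -/
def downSet {n : ℕ} (σ : Equiv.Perm (Fin n)) (x : Fin n) : Finset (Fin n) :=
  Finset.univ.filter fun i => σ.symm x < σ.symm i

/-- `f_β(t) = Σ_{k=2}^n β_k C(t,k-1)`. -/
def fβ (n : ℕ) (β : Fin (n - 1) → ℝ) (t : ℕ) : ℝ :=
  ∑ k : Fin (n - 1), β k * (t.choose (k.1 + 1) : ℝ)

/-- The `β`-Spearman footrule distance. -/
def dapx (n : ℕ) (β : Fin (n - 1) → ℝ) (σ π : Equiv.Perm (Fin n)) : ℝ :=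
  ∑ x : Fin n, |fβ n β (downSet σ x).card - fβ n β (downSet π x).card|

/-!
Write `a x = |x^{↓,σ}|`, `b x = |x^{↓,π}|` and `c x = |x^{↓,σ} ∩ x^{↓,π}|`. The menus whose
`σ`-top is `x` are `x` together with a nonempty subset of `x^{↓,σ}`, and summing `β` over them
gives `f_β(a x)`. Hence `d_β(σ,π) = Σ_x (f_β(a x) + f_β(b x) - 2 f_β(c x))`, which is at least
`d^apx_β` and equals `d^apx_β + 2 Σ_x (f_β(min (a x) (b x)) - f_β(c x))`.

The increments of `f_β` are nondecreasing, so `f_β(min (a x) (b x)) - f_β(c x)` is at most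
`min (a x) (b x) - c x` increments of `f_β` at `a x`. Among the `min (a x) (b x)` candidates lowest
in `π`, at most `c x` are below `x` in `σ`; each of the others is a `w` with
`b w < min (a x) (b x)` and `a x < a w`, and `x` charges one increment to it. The increments
charged to a fixed `w` sit at distinct places between `b w` and `a w - 1`, so they add up to at most
`f_β(a w - 1) - f_β(b w) ≤ (γ_β - 1) (f_β(a w) - f_β(b w))`.
-/

section Increments

variable {F : ℕ → ℝ}

lemma sub_le_mul_increment (hΔ : Monotone fun t => F (t + 1) - F t) {c m k : ℕ}
    (hcm : c ≤ m) (hmk : m ≤ k + 1) :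
    F m - F c ≤ (m - c : ℕ) * (F (k + 1) - F k) := by
  rw [← sum_Ico_sub F hcm]
  calc ∑ i ∈ Ico c m, (F (i + 1) - F i) ≤ ∑ _i ∈ Ico c m, (F (k + 1) - F k) :=
        sum_le_sum fun i hi => hΔ (by rw [mem_Ico] at hi; omega)
    _ = (m - c : ℕ) * (F (k + 1) - F k) := by rw [sum_const, Nat.card_Ico, nsmul_eq_mul]

lemma sum_increment_le_of_injOn {ι : Type*} (hF : Monotone F) {s : Finset ι} {g : ι → ℕ}
    {p q : ℕ} (hg : Set.InjOn g s) (hmaps : ∀ i ∈ s, g i ∈ Ico p q) (hpq : p ≤ q) :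
    ∑ i ∈ s, (F (g i + 1) - F (g i)) ≤ F q - F p := by
  rw [← sum_Ico_sub F hpq, ← sum_image (f := fun t => F (t + 1) - F t) hg]
  refine sum_le_sum_of_subset_of_nonneg ?_ fun t _ _ => sub_nonneg.2 (hF t.le_succ)
  simpa [subset_iff] using hmaps

end Increments

section Ratio

variable {F : ℕ → ℝ} {n : ℕ}

lemma le_sup'_ratio_sub_one_mul (hF : Monotone F) (hF0 : ∀ t, 0 ≤ F t)
    (hne : (Icc 1 n).Nonempty) {t : ℕ} (ht : t < n) :
    F t ≤ ((Icc 1 n).sup' hne (fun h => 1 + F (n - h) / F (n - (h - 1))) - 1) * F (t + 1) := by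
  have hratio : F t / F (t + 1) ≤
      (Icc 1 n).sup' hne (fun h => 1 + F (n - h) / F (n - (h - 1))) - 1 := by
    have h := le_sup' (fun h => 1 + F (n - h) / F (n - (h - 1)))
      (mem_Icc.2 ⟨by omega, by omega⟩ : n - t ∈ Icc 1 n)
    rw [show n - (n - t) = t by omega, show n - (n - t - 1) = t + 1 by omega] at h
    linarith
  rcases (hF0 (t + 1)).eq_or_lt with h0 | hpos
  · simp [← h0, show F t ≤ 0 from h0 ▸ hF t.le_succ]
  · calc F t = F t / F (t + 1) * F (t + 1) := (div_mul_cancel₀ _ hpos.ne').symm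
      _ ≤ _ := mul_le_mul_of_nonneg_right hratio hpos.le

lemma sup'_ratio_le_two (hF : Monotone F) (hF0 : ∀ t, 0 ≤ F t) (hne : (Icc 1 n).Nonempty) :
    (Icc 1 n).sup' hne (fun h => 1 + F (n - h) / F (n - (h - 1))) ≤ 2 := by
  refine sup'_le _ _ fun h hh => ?_
  rw [mem_Icc] at hh
  have : F (n - h) / F (n - (h - 1)) ≤ 1 := div_le_one_of_le₀ (hF (by omega)) (hF0 _)
  linarith

end Ratio

lemma card_symmDiff_add_two_mul_card_inter {α : Type*} [DecidableEq α] (A B : Finset α) :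
    #(symmDiff A B) + 2 * #(A ∩ B) = #A + #B := by
  rw [symmDiff_eq_sup_sdiff_inf, sup_eq_union, inf_eq_inter,
    card_sdiff_of_subset inter_subset_union]
  have := card_le_card (inter_subset_union (s := A) (t := B))
  have := card_union_add_card_inter A B
  omega

lemma sum_mul_card_eq_sum_sum_filter {ι α : Type*} [Fintype α] [DecidableEq α] (s : Finset ι)
    (w : ι → ℝ) (A : ι → Finset α) :
    ∑ i ∈ s, w i * #(A i) = ∑ x, ∑ i ∈ s with x ∈ A i, w i := by
  simp_rw [card_eq_sum_ones, Nat.cast_sum, Nat.cast_one, mul_sum, mul_one]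
  exact sum_comm' (by simp)

section FBeta

variable {n : ℕ} {β : Fin (n - 1) → ℝ}

lemma fβ_nonneg (hβ : ∀ k, 0 ≤ β k) (t : ℕ) : 0 ≤ fβ n β t :=
  sum_nonneg fun k _ => mul_nonneg (hβ k) (Nat.cast_nonneg _)

lemma fβ_mono (hβ : ∀ k, 0 ≤ β k) : Monotone (fβ n β) := fun _ _ h =>
  sum_le_sum fun k _ =>
    mul_le_mul_of_nonneg_left (by exact_mod_cast Nat.choose_le_choose _ h) (hβ k)

lemma fβ_succ_sub (t : ℕ) :
    fβ n β (t + 1) - fβ n β t = ∑ k : Fin (n - 1), β k * (t.choose k : ℝ) := by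
  simp only [fβ, ← sum_sub_distrib, Nat.choose_succ_succ', Nat.cast_add, mul_add,
    add_sub_cancel_right]

lemma fβ_increment_mono (hβ : ∀ k, 0 ≤ β k) :
    Monotone fun t => fβ n β (t + 1) - fβ n β t := by
  intro s t h
  simp only [fβ_succ_sub]
  exact sum_le_sum fun k _ =>
    mul_le_mul_of_nonneg_left (by exact_mod_cast Nat.choose_le_choose _ h) (hβ k)

/-- Because of the truncated `k - 2`, this is `β_2` also for `k < 2`, so sums over menus must keep
the filter `2 ≤ #S`. -/
def menuWeight (n : ℕ) (β : Fin (n - 1) → ℝ) (k : ℕ) : ℝ :=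
  if h : k - 2 < n - 1 then β ⟨k - 2, h⟩ else 0

lemma fβ_eq_sum_powerset {α : Type*} {D : Finset α} (hD : #D < n) :
    fβ n β #D = ∑ T ∈ D.powerset with T.Nonempty, menuWeight n β (#T + 1) := by
  have hcard : ∀ T ∈ D.powerset, (if T.Nonempty then menuWeight n β (#T + 1) else 0) =
      (fun j => if j = 0 then 0 else menuWeight n β (j + 1)) #T := by
    intro T _
    simp only [← card_pos, Nat.pos_iff_ne_zero, ite_not]
  rw [sum_filter, sum_congr rfl hcard, sum_powerset_apply_card
    (fun j => if j = 0 then 0 else menuWeight n β (j + 1)), sum_range_succ']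
  simp only [↓reduceIte, smul_zero, add_zero, nsmul_eq_mul, Nat.add_eq_zero_iff, one_ne_zero,
    and_false]
  calc fβ n β #D
      = ∑ k ∈ range (n - 1), ((#D).choose (k + 1) : ℝ) * menuWeight n β (k + 1 + 1) := by
        rw [fβ, ← Fin.sum_univ_eq_sum_range]
        exact sum_congr rfl fun k _ => by simp [menuWeight, mul_comm]
    _ = _ := by
        refine (sum_subset (range_subset_range.2 (by omega)) fun k _ hk => ?_).symm
        rw [Nat.choose_eq_zero_of_lt (by simp at hk; omega), Nat.cast_zero, zero_mul]

lemma sum_menuWeight_eq_fβ {z : Fin n} {D : Finset (Fin n)} (hz : z ∉ D) :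
    ∑ S ∈ ({S | 2 ≤ #S} : Finset (Finset (Fin n))) with z ∈ S ∧ S ⊆ insert z D,
      menuWeight n β #S = fβ n β #D := by
  rw [fβ_eq_sum_powerset ((card_lt_univ_of_notMem hz).trans_eq (Fintype.card_fin n))]
  have hzT : ∀ T ∈ D.powerset.filter Finset.Nonempty, z ∉ T := fun T hT hzT =>
    hz (mem_powerset.1 (mem_filter.1 hT).1 hzT)
  refine (sum_nbij' (insert z) (fun S => S.erase z) ?_ ?_ ?_ ?_ ?_).symm
  · intro T hT
    have hzT := hzT T hT
    simp only [mem_filter, mem_powerset, mem_univ, true_and] at hT ⊢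
    rw [card_insert_of_notMem hzT]
    exact ⟨by have := hT.2.card_pos; omega, mem_insert_self _ _, insert_subset_insert _ hT.1⟩
  · intro S hS
    simp only [mem_filter, mem_univ, true_and, mem_powerset] at hS ⊢
    obtain ⟨hcard, hzS, hSD⟩ := hS
    refine ⟨(erase_subset_erase z hSD).trans (erase_insert_subset z D), ?_⟩
    rw [← card_pos, card_erase_of_mem hzS]
    omega
  · exact fun T hT => erase_insert (hzT T hT)
  · exact fun S hS => insert_erase (mem_filter.1 hS).2.1
  · intro T hT
    rw [card_insert_of_notMem (hzT T hT)]

end FBeta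

section Rank

variable {n : ℕ} (σ : Equiv.Perm (Fin n))

lemma card_downSet (x : Fin n) : #(downSet σ x) = ((σ.symm x).rev : ℕ) := by
  rw [card_equiv σ.symm (t := Ioi (σ.symm x)) (by simp [downSet]), Fin.card_Ioi, Fin.val_rev]
  omega

lemma card_downSet_lt (x : Fin n) : #(downSet σ x) < n :=
  card_downSet σ x ▸ (σ.symm x).rev.isLt

lemma mem_downSet_iff_card_lt {x y : Fin n} :
    y ∈ downSet σ x ↔ #(downSet σ y) < #(downSet σ x) := by
  rw [card_downSet, card_downSet, Fin.val_fin_lt, Fin.rev_lt_rev]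
  simp [downSet]

lemma card_downSet_injective : Function.Injective fun x => #(downSet σ x) := by
  intro x y h
  simp only [card_downSet] at h
  exact σ.symm.injective (Fin.rev_injective (Fin.ext h))

lemma card_filter_card_downSet_lt {m : ℕ} (hm : m ≤ n) :
    #{y | #(downSet σ y) < m} = m := by
  rw [card_equiv (σ.symm.trans Fin.revPerm) (t := {i : Fin n | (i : ℕ) < m})
    (by simp [card_downSet]), Fin.card_filter_val_lt, min_eq_right hm]

lemma mem_insert_downSet_iff {x y : Fin n} :
    y ∈ insert x (downSet σ x) ↔ σ.symm x ≤ σ.symm y := by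
  simp [downSet, le_iff_eq_or_lt, eq_comm]

lemma mem_bestSet_iff {x : Fin n} {S : Finset (Fin n)} :
    x ∈ bestSet σ S ↔ x ∈ S ∧ S ⊆ insert x (downSet σ x) := by
  simp only [bestSet, mem_filter, subset_iff, mem_insert_downSet_iff]

lemma mem_bestSet_inter_iff (π : Equiv.Perm (Fin n)) {x : Fin n} {S : Finset (Fin n)} :
    x ∈ bestSet σ S ∩ bestSet π S ↔ x ∈ S ∧ S ⊆ insert x (downSet σ x ∩ downSet π x) := by
  rw [mem_inter, mem_bestSet_iff, mem_bestSet_iff, insert_inter_distrib, subset_inter_iff]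
  tauto

end Rank

section Comparison

variable {n : ℕ} {β : Fin (n - 1) → ℝ} (σ π : Equiv.Perm (Fin n))

lemma dTD_one_eq_sum :
    dTD n β (fun _ => 1) σ π = ∑ z, (fβ n β #(downSet σ z) + fβ n β #(downSet π z)
      - 2 * fβ n β #(downSet σ z ∩ downSet π z)) := by
  have hcard : ∀ S, ∑ x ∈ topDiff σ π S, (1 : ℝ) = #(bestSet σ S) + #(bestSet π S)
      - 2 * #(bestSet σ S ∩ bestSet π S) := by
    intro S
    rw [sum_const, nsmul_one, eq_sub_iff_add_eq]
    exact_mod_cast card_symmDiff_add_two_mul_card_inter _ _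
  simp only [dTD, hcard, mul_sub, mul_add, sum_sub_distrib, sum_add_distrib,
    mul_left_comm _ (2 : ℝ), ← mul_sum]
  simp only [show ∀ k, (if h : k - 2 < n - 1 then β ⟨k - 2, h⟩ else 0) = menuWeight n β k from
    fun _ => rfl, sum_mul_card_eq_sum_sum_filter, mem_bestSet_iff, mem_bestSet_inter_iff]
  simp (disch := simp [downSet]) only [sum_menuWeight_eq_fβ]

lemma dapx_le_dTD (hβ : ∀ k, 0 ≤ β k) : dapx n β σ π ≤ dTD n β (fun _ => 1) σ π := by
  rw [dTD_one_eq_sum]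
  refine sum_le_sum fun z _ => abs_sub_le_iff.2 ⟨?_, ?_⟩ <;>
    linarith [fβ_mono hβ (card_le_card (inter_subset_left (s₁ := downSet σ z) (s₂ := downSet π z))),
      fβ_mono hβ (card_le_card (inter_subset_right (s₁ := downSet σ z) (s₂ := downSet π z)))]

lemma min_sub_card_inter_le (z : Fin n) :
    min #(downSet σ z) #(downSet π z) - #(downSet σ z ∩ downSet π z) ≤
      #{w | #(downSet π w) < min #(downSet σ z) #(downSet π z) ∧
        #(downSet σ z) < #(downSet σ w)} := by
  set m := min #(downSet σ z) #(downSet π z) with hm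
  have hcover : ({y | #(downSet π y) < m} : Finset (Fin n)) ⊆ (downSet σ z ∩ downSet π z) ∪
      ({w | #(downSet π w) < m ∧ #(downSet σ z) < #(downSet σ w)} : Finset (Fin n)) := by
    intro y hy
    simp only [mem_filter, mem_univ, true_and, mem_union, mem_inter,
      mem_downSet_iff_card_lt] at hy ⊢
    have hyz : #(downSet σ y) ≠ #(downSet σ z) := (card_downSet_injective σ).ne (by
      rintro rfl
      omega)
    omega
  have hcard := (card_le_card hcover).trans (card_union_le _ _)
  rw [card_filter_card_downSet_lt π (by have := card_downSet_lt π z; omega)] at hcard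
  omega

variable {F : ℕ → ℝ}

lemma sub_le_sum_increment (hF : Monotone F) (hΔ : Monotone fun t => F (t + 1) - F t)
    (z : Fin n) :
    F (min #(downSet σ z) #(downSet π z)) - F #(downSet σ z ∩ downSet π z) ≤
      ∑ _w ∈ {w | #(downSet π w) < min #(downSet σ z) #(downSet π z) ∧
        #(downSet σ z) < #(downSet σ w)},
        (F (#(downSet σ z) - 1 + 1) - F (#(downSet σ z) - 1)) := by
  rw [sum_const, nsmul_eq_mul]
  have hcm := le_min (card_le_card (inter_subset_left (s₁ := downSet σ z) (s₂ := downSet π z)))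
    (card_le_card inter_subset_right)
  refine (sub_le_mul_increment hΔ hcm (k := #(downSet σ z) - 1) (by omega)).trans ?_
  exact mul_le_mul_of_nonneg_right (by exact_mod_cast min_sub_card_inter_le σ π z)
    (sub_nonneg.2 (hF (Nat.le_succ _)))

lemma sum_increment_le_posPart (hF : Monotone F) (hF0 : ∀ t, 0 ≤ F t) {R : ℝ}
    (hR : ∀ t < n - 1, F t ≤ R * F (t + 1)) (hR1 : R ≤ 1) (w : Fin n) :
    ∑ z ∈ {z | #(downSet π w) < min #(downSet σ z) #(downSet π z) ∧
        #(downSet σ z) < #(downSet σ w)},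
        (F (#(downSet σ z) - 1 + 1) - F (#(downSet σ z) - 1)) ≤
      R * (F #(downSet σ w) - F #(downSet π w))⁺ := by
  by_cases hw : #(downSet π w) < #(downSet σ w)
  · set T : Finset (Fin n) := {z | #(downSet π w) < min #(downSet σ z) #(downSet π z) ∧
      #(downSet σ z) < #(downSet σ w)} with hT
    have hinj : Set.InjOn (fun z => #(downSet σ z) - 1) T := by
      intro z hz z' hz' h
      simp only [hT, coe_filter, mem_univ, true_and, Set.mem_ofPred_eq] at hz hz' h
      exact card_downSet_injective σ (show #(downSet σ z) = #(downSet σ z') by omega)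
    have hmaps : ∀ z ∈ T, #(downSet σ z) - 1 ∈ Ico #(downSet π w) (#(downSet σ w) - 1) := by
      intro z hz
      simp only [hT, mem_filter, mem_univ, true_and, mem_Ico] at hz ⊢
      omega
    have hshift := hR (#(downSet σ w) - 1) (by have := card_downSet_lt σ w; omega)
    rw [Nat.sub_add_cancel (by omega)] at hshift
    calc _ ≤ F (#(downSet σ w) - 1) - F #(downSet π w) :=
          sum_increment_le_of_injOn hF hinj hmaps (by omega)
      _ ≤ R * F #(downSet σ w) - R * F #(downSet π w) := by
          nlinarith [hF0 #(downSet π w)]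
      _ = R * (F #(downSet σ w) - F #(downSet π w))⁺ := by
          rw [posPart_eq_self.2 (sub_nonneg.2 (hF hw.le)), mul_sub]
  · rw [posPart_eq_zero.2 (sub_nonpos.2 (hF (not_lt.1 hw))), mul_zero]
    refine (sum_eq_zero fun z hz => ?_).le
    simp only [mem_filter, mem_univ, true_and] at hz
    omega

lemma sum_sub_le_mul_sum_posPart (hF : Monotone F) (hΔ : Monotone fun t => F (t + 1) - F t)
    (hF0 : ∀ t, 0 ≤ F t) {R : ℝ} (hR : ∀ t < n - 1, F t ≤ R * F (t + 1)) (hR1 : R ≤ 1) :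
    ∑ z, (F (min #(downSet σ z) #(downSet π z)) - F #(downSet σ z ∩ downSet π z)) ≤
      R * ∑ w, (F #(downSet σ w) - F #(downSet π w))⁺ := by
  rw [mul_sum]
  refine ((sum_le_sum fun z _ => sub_le_sum_increment σ π hF hΔ z).trans_eq
    (sum_comm' ?_)).trans (sum_le_sum fun w _ => sum_increment_le_posPart σ π hF hF0 hR hR1 w)
  simp

lemma dTD_le_mul_dapx (hβ : ∀ k, 0 ≤ β k) {R : ℝ}
    (hR : ∀ t < n - 1, fβ n β t ≤ R * fβ n β (t + 1)) (hR1 : R ≤ 1) :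
    dTD n β (fun _ => 1) σ π ≤ (1 + R) * dapx n β σ π := by
  rw [dTD_one_eq_sum, dapx]
  set F := fβ n β
  have hF : Monotone F := fβ_mono hβ
  have hσπ := sum_sub_le_mul_sum_posPart σ π hF (fβ_increment_mono hβ) (fβ_nonneg hβ) hR hR1
  have hπσ := sum_sub_le_mul_sum_posPart π σ hF (fβ_increment_mono hβ) (fβ_nonneg hβ) hR hR1
  have hsplit : ∀ z, F #(downSet σ z) + F #(downSet π z) - 2 * F #(downSet σ z ∩ downSet π z) =
      |F #(downSet σ z) - F #(downSet π z)|
        + (F (min #(downSet σ z) #(downSet π z)) - F #(downSet σ z ∩ downSet π z))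
        + (F (min #(downSet π z) #(downSet σ z)) - F #(downSet π z ∩ downSet σ z)) := by
    intro z
    rw [inter_comm (downSet π z), min_comm #(downSet π z), hF.map_min, abs_sub_comm]
    linarith [min_add_max (F #(downSet σ z)) (F #(downSet π z)),
      max_sub_min_eq_abs (F #(downSet σ z)) (F #(downSet π z))]
  have habs : ∑ w, |F #(downSet σ w) - F #(downSet π w)| =
      ∑ w, (F #(downSet σ w) - F #(downSet π w))⁺
        + ∑ w, (F #(downSet π w) - F #(downSet σ w))⁺ := by
    rw [← sum_add_distrib]
    exact sum_congr rfl fun w _ => by rw [← posPart_add_negPart, ← posPart_neg, neg_sub]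
  simp only [hsplit, sum_add_distrib]
  rw [habs]
  linarith

end Comparison

theorem stmt18 (n : ℕ) (hn : 2 ≤ n) (β : Fin (n - 1) → ℝ)
    (hβ : ∀ k, 0 ≤ β k)
    (σ π : Equiv.Perm (Fin n)) :
    dapx n β σ π ≤ dTD n β (fun _ => (1 : ℝ)) σ π ∧
      dTD n β (fun _ => (1 : ℝ)) σ π ≤
        ((Finset.Icc 1 n).sup' (Finset.nonempty_Icc.mpr (by omega))
            (fun h => 1 + fβ n β (n - h) / fβ n β (n - (h - 1)))) *
          dapx n β σ π := by
  have hne : (Icc 1 n).Nonempty := nonempty_Icc.mpr (by omega)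
  refine ⟨dapx_le_dTD σ π hβ, ?_⟩
  have hle := dTD_le_mul_dapx σ π hβ
    (fun t (ht : t < n - 1) => le_sup'_ratio_sub_one_mul (fβ_mono hβ) (fβ_nonneg hβ) hne (by omega))
    (by linarith [sup'_ratio_le_two (fβ_mono hβ) (fβ_nonneg hβ) hne])
  rwa [add_sub_cancel] at hle
end
end
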